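/- arXiv:2401.11377 — 7 statements merged into one kernel-verified Lean document; each statement's English description precedes it below -/
import Mathlib

section
/- Consider K = 2 tasks with computation cycles F₁, F₂ > 0 and slot durations Δt₂, Δt₃ > 0. Task 1 can be processed in slots 2 and 3 with frequencies f_{1,2}, f_{1,3} ≥ 0; task 2 only in slot 3 with frequency f_{2,3} ≥ 0. Completion requires f_{1,2}·Δt₂ + f_{1,3}·Δt₃ ≥ F₁ and f_{2,3}·Δt₃ ≥ F₂, and per-slot capacity requires f_{1,2} ≤ F_max and f_{1,3} + f_{2,3} ≤ F_max. A feasible assignment exists if and only if F_max ≥ max{(F₁+F₂)/(Δt₂+Δt₃), F₂/Δt₃}. -/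
/-!
Necessity: task 2 can only use slot 3, so `F₂ ≤ F_max Δt₃`; adding the two completion constraints
and bounding each slot's total frequency by `F_max` gives `F₁ + F₂ ≤ F_max (Δt₂ + Δt₃)`.
Sufficiency: run task 2 at exactly `F₂ / Δt₃` in slot 3 and give task 1 all the remaining
capacity, `F_max` in slot 2 and `F_max - F₂ / Δt₃` in slot 3.
-/

namespace TwoTask

variable {F1 F2 Δt2 Δt3 Fmax : ℝ}

theorem capacity_bounds_of_feasible (hΔt2 : 0 ≤ Δt2) (hΔt3 : 0 ≤ Δt3)
    {f12 f13 f23 : ℝ} (h13 : 0 ≤ f13) (hdone1 : F1 ≤ f12 * Δt2 + f13 * Δt3)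
    (hdone2 : F2 ≤ f23 * Δt3) (hcap2 : f12 ≤ Fmax) (hcap3 : f13 + f23 ≤ Fmax) :
    F1 + F2 ≤ Fmax * (Δt2 + Δt3) ∧ F2 ≤ Fmax * Δt3 := by
  have hslot2 : f12 * Δt2 ≤ Fmax * Δt2 := mul_le_mul_of_nonneg_right hcap2 hΔt2
  have hslot3 : (f13 + f23) * Δt3 ≤ Fmax * Δt3 := mul_le_mul_of_nonneg_right hcap3 hΔt3
  have htask2 : f23 * Δt3 ≤ Fmax * Δt3 :=
    mul_le_mul_of_nonneg_right (by linarith) hΔt3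
  constructor <;> linarith

theorem exists_feasible_of_capacity_bounds (hF2 : 0 ≤ F2) (hΔt3 : 0 < Δt3)
    (htotal : F1 + F2 ≤ Fmax * (Δt2 + Δt3)) (hslot3 : F2 ≤ Fmax * Δt3) :
    ∃ f12 f13 f23 : ℝ, 0 ≤ f12 ∧ 0 ≤ f13 ∧ 0 ≤ f23 ∧
      F1 ≤ f12 * Δt2 + f13 * Δt3 ∧ F2 ≤ f23 * Δt3 ∧
      f12 ≤ Fmax ∧ f13 + f23 ≤ Fmax := by
  have hrate : F2 / Δt3 ≤ Fmax := (div_le_iff₀ hΔt3).2 hslot3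
  have hrate_nonneg : 0 ≤ F2 / Δt3 := div_nonneg hF2 hΔt3.le
  have hwork2 : F2 / Δt3 * Δt3 = F2 := div_mul_cancel₀ F2 hΔt3.ne'
  refine ⟨Fmax, Fmax - F2 / Δt3, F2 / Δt3, hrate_nonneg.trans hrate, sub_nonneg.2 hrate,
    hrate_nonneg, ?_, hwork2.ge, le_rfl, by rw [sub_add_cancel]⟩
  calc F1 ≤ Fmax * (Δt2 + Δt3) - F2 := le_sub_right_of_add_le htotal
    _ = Fmax * Δt2 + (Fmax - F2 / Δt3) * Δt3 := by rw [sub_mul, hwork2]; ring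

end TwoTask

theorem stmt_4_general (F1 F2 Δt2 Δt3 Fmax : ℝ) (hF2 : 0 < F2)
    (hΔt2 : 0 < Δt2) (hΔt3 : 0 < Δt3) :
    (∃ f12 f13 f23 : ℝ, 0 ≤ f12 ∧ 0 ≤ f13 ∧ 0 ≤ f23 ∧
        F1 ≤ f12 * Δt2 + f13 * Δt3 ∧ F2 ≤ f23 * Δt3 ∧
        f12 ≤ Fmax ∧ f13 + f23 ≤ Fmax) ↔
      max ((F1 + F2) / (Δt2 + Δt3)) (F2 / Δt3) ≤ Fmax := by
  rw [max_le_iff, div_le_iff₀ (add_pos hΔt2 hΔt3), div_le_iff₀ hΔt3]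
  constructor
  · rintro ⟨f12, f13, f23, -, h13, -, hdone1, hdone2, hcap2, hcap3⟩
    exact TwoTask.capacity_bounds_of_feasible hΔt2.le hΔt3.le h13 hdone1 hdone2 hcap2 hcap3
  · rintro ⟨htotal, hslot3⟩
    exact TwoTask.exists_feasible_of_capacity_bounds hF2.le hΔt3 htotal hslot3

/-- Two-task feasibility: a feasible frequency assignment exists iff
F_max ≥ max{(F₁+F₂)/(Δt₂+Δt₃), F₂/Δt₃}. -/
theorem stmt_4 (F1 F2 Δt2 Δt3 Fmax : ℝ) (hF1 : 0 < F1) (hF2 : 0 < F2)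
    (hΔt2 : 0 < Δt2) (hΔt3 : 0 < Δt3) :
    (∃ f12 f13 f23 : ℝ, 0 ≤ f12 ∧ 0 ≤ f13 ∧ 0 ≤ f23 ∧
        F1 ≤ f12 * Δt2 + f13 * Δt3 ∧ F2 ≤ f23 * Δt3 ∧
        f12 ≤ Fmax ∧ f13 + f23 ≤ Fmax) ↔
      max ((F1 + F2) / (Δt2 + Δt3)) (F2 / Δt3) ≤ Fmax :=
  stmt_4_general F1 F2 Δt2 Δt3 Fmax hF2 hΔt2 hΔt3
end

section
/- Let N ≥ 1, let F₁,…,F_N > 0 be task cycle requirements and Δt₂,…,Δt_{N+1} > 0 slot durations. There exist nonnegative frequencies f_{n,m} for 1 ≤ n ≤ N, n+1 ≤ m ≤ N+1, satisfying (i) ∑_{n=1}^{m−1} f_{n,m} ≤ F_max for every m ∈ {2,…,N+1}, and (ii) ∑_{m=n+1}^{N+1} f_{n,m}·Δt_m ≥ F_n for every n, if and only if F_max ≥ max_{n∈{1,…,N}} (∑_{i=n}^{N} F_i) / (∑_{i=n+1}^{N+1} Δt_i). -/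
/-!
Necessity: summing the completion constraints of tasks `n, …, N` and exchanging the order of
summation, all of this work is done in slots `n + 1, …, N + 1`, which offer at most
`F_max * ∑_{i=n+1}^{N+1} Δt_i` cycles.

Sufficiency is a water-filling schedule. Lay the work out on a line, task `n` occupying
`[W (n+1), W n]` with `W n = ∑_{i ≥ n} F_i`, and the capacity likewise, slot `m` occupying
`[S (m+1), S m]` with `S m = F_max * ∑_{j ≥ m} Δt_j`. Task `n` receives in slot `m` the
length of the overlap of its work interval with the slot's capacity interval. The condition
says `W n ≤ S (n+1)`: the work of task `n` lies entirely within the capacity of the slots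
after it.
-/

open Finset

noncomputable def overlapLength (a b u v : ℝ) : ℝ :=
  max (min b v - max a u) 0

lemma overlapLength_comm (a b u v : ℝ) : overlapLength a b u v = overlapLength u v a b := by
  rw [overlapLength, overlapLength, min_comm, max_comm a]

lemma overlapLength_nonneg (a b u v : ℝ) : 0 ≤ overlapLength a b u v :=
  le_max_right _ _

lemma overlapLength_eq_sub {a b u v : ℝ} (hab : a ≤ b) (huv : u ≤ v) :
    overlapLength a b u v = min b (max a v) - min b (max a u) := by
  simp only [overlapLength, min_def, max_def]
  split_ifs <;> linarith

lemma sum_overlapLength_of_antitone {a b : ℝ} (hab : a ≤ b) {t : ℕ → ℝ} {l r : ℕ}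
    (hlr : l ≤ r) (ht : ∀ m ∈ Icc l r, t (m + 1) ≤ t m) :
    ∑ m ∈ Icc l r, overlapLength a b (t (m + 1)) (t m) =
      min b (max a (t l)) - min b (max a (t (r + 1))) := by
  rw [← neg_sub_neg, ← sum_Icc_sub hlr fun m => -min b (max a (t m))]
  refine sum_congr rfl fun m hm => ?_
  rw [overlapLength_eq_sub hab (ht m hm)]
  ring

section Allocation

variable (N : ℕ) (Fmax : ℝ) (F Δt : ℕ → ℝ)

def IsFeasibleAllocation (f : ℕ → ℕ → ℝ) : Prop :=
  (∀ n ∈ Icc 1 N, ∀ m ∈ Icc (n + 1) (N + 1), 0 ≤ f n m) ∧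
  (∀ m ∈ Icc 2 (N + 1), ∑ n ∈ Icc 1 (m - 1), f n m ≤ Fmax) ∧
  (∀ n ∈ Icc 1 N, F n ≤ ∑ m ∈ Icc (n + 1) (N + 1), f n m * Δt m)

theorem sum_Icc_le_mul_sum_Icc_of_isFeasibleAllocation
    (hΔt : ∀ m ∈ Icc 2 (N + 1), 0 ≤ Δt m) {f : ℕ → ℕ → ℝ}
    (hf : IsFeasibleAllocation N Fmax F Δt f) {n : ℕ} (hn : 1 ≤ n) :
    ∑ i ∈ Icc n N, F i ≤ Fmax * ∑ i ∈ Icc (n + 1) (N + 1), Δt i := by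
  obtain ⟨hnonneg, hcap, hcomp⟩ := hf
  calc ∑ i ∈ Icc n N, F i
      ≤ ∑ i ∈ Icc n N, ∑ m ∈ Icc (i + 1) (N + 1), f i m * Δt m :=
        sum_le_sum fun i hi => hcomp i (by simp only [mem_Icc] at hi ⊢; omega)
    _ = ∑ m ∈ Icc (n + 1) (N + 1), (∑ i ∈ Icc n (m - 1), f i m) * Δt m := by
        simp_rw [sum_mul]
        exact sum_comm' fun i m => by simp only [mem_Icc]; omega
    _ ≤ ∑ m ∈ Icc (n + 1) (N + 1), Fmax * Δt m := by
        refine sum_le_sum fun m hm => ?_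
        simp only [mem_Icc] at hm
        have hsub : ∑ i ∈ Icc n (m - 1), f i m ≤ ∑ i ∈ Icc 1 (m - 1), f i m :=
          sum_le_sum_of_subset_of_nonneg (Icc_subset_Icc_left hn) fun i hi _ => by
            simp only [mem_Icc] at hi
            exact hnonneg i (by simp only [mem_Icc]; omega) m (by simp only [mem_Icc]; omega)
        have hcapm := hcap m (by simp only [mem_Icc]; omega)
        exact mul_le_mul_of_nonneg_right (hsub.trans hcapm)
          (hΔt m (by simp only [mem_Icc]; omega))
    _ = Fmax * ∑ i ∈ Icc (n + 1) (N + 1), Δt i := (mul_sum ..).symm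

def workFrom (n : ℕ) : ℝ := ∑ i ∈ Icc n N, F i

def capacityFrom (m : ℕ) : ℝ := Fmax * ∑ j ∈ Icc m (N + 1), Δt j

noncomputable def waterFillingAllocation (n m : ℕ) : ℝ :=
  overlapLength (workFrom N F (n + 1)) (workFrom N F n)
    (capacityFrom N Fmax Δt (m + 1)) (capacityFrom N Fmax Δt m) / Δt m

variable {N Fmax F Δt}

lemma workFrom_eq_add {n : ℕ} (hn : n ≤ N) : workFrom N F n = F n + workFrom N F (n + 1) := by
  rw [workFrom, workFrom, Icc_add_one_left_eq_Ioc, add_sum_Ioc_eq_sum_Icc hn]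

lemma workFrom_nonneg (hF : ∀ n ∈ Icc 1 N, 0 ≤ F n) {n : ℕ} (hn : 1 ≤ n) :
    0 ≤ workFrom N F n :=
  sum_nonneg fun i hi => hF i (by simp only [mem_Icc] at hi ⊢; omega)

lemma workFrom_succ_le (hF : ∀ n ∈ Icc 1 N, 0 ≤ F n) {n : ℕ} (hn : n ∈ Icc 1 N) :
    workFrom N F (n + 1) ≤ workFrom N F n := by
  rw [workFrom_eq_add (mem_Icc.mp hn).2]
  linarith [hF n hn]

lemma capacityFrom_eq_add {m : ℕ} (hm : m ≤ N + 1) :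
    capacityFrom N Fmax Δt m = Fmax * Δt m + capacityFrom N Fmax Δt (m + 1) := by
  rw [capacityFrom, capacityFrom, Icc_add_one_left_eq_Ioc, ← add_sum_Ioc_eq_sum_Icc hm, mul_add]

lemma capacityFrom_succ_le (hFmax : 0 ≤ Fmax) {m : ℕ} (hΔt : 0 ≤ Δt m) (hm : m ≤ N + 1) :
    capacityFrom N Fmax Δt (m + 1) ≤ capacityFrom N Fmax Δt m := by
  rw [capacityFrom_eq_add hm]
  linarith [mul_nonneg hFmax hΔt]

lemma capacityFrom_of_lt {m : ℕ} (hm : N + 1 < m) : capacityFrom N Fmax Δt m = 0 := by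
  rw [capacityFrom, Icc_eq_empty (by omega), sum_empty, mul_zero]

lemma sum_waterFillingAllocation_le (hF : ∀ n ∈ Icc 1 N, 0 ≤ F n) (hFmax : 0 ≤ Fmax)
    {m : ℕ} (hΔt : 0 < Δt m) (hm : m ∈ Icc 2 (N + 1)) :
    ∑ n ∈ Icc 1 (m - 1), waterFillingAllocation N Fmax F Δt n m ≤ Fmax := by
  have hm' := mem_Icc.mp hm
  have hS := capacityFrom_succ_le hFmax hΔt.le hm'.2
  simp only [waterFillingAllocation, overlapLength_comm (workFrom N F _)]
  rw [← sum_div, div_le_iff₀ hΔt, sum_overlapLength_of_antitone hS (by omega)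
      fun n hn => workFrom_succ_le hF (by simp only [mem_Icc] at hn ⊢; omega),
    Nat.sub_add_cancel (by omega : 1 ≤ m)]
  have hle := min_le_left (capacityFrom N Fmax Δt m)
    (max (capacityFrom N Fmax Δt (m + 1)) (workFrom N F 1))
  have hge := le_min hS (le_max_left (capacityFrom N Fmax Δt (m + 1)) (workFrom N F m))
  linarith [capacityFrom_eq_add (Fmax := Fmax) (Δt := Δt) hm'.2]

lemma sum_waterFillingAllocation_mul_eq (hF : ∀ n ∈ Icc 1 N, 0 ≤ F n)
    (hΔt : ∀ m ∈ Icc 2 (N + 1), 0 < Δt m) (hFmax : 0 ≤ Fmax) {n : ℕ} (hn : n ∈ Icc 1 N)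
    (hcond : workFrom N F n ≤ capacityFrom N Fmax Δt (n + 1)) :
    ∑ m ∈ Icc (n + 1) (N + 1), waterFillingAllocation N Fmax F Δt n m * Δt m = F n := by
  have hn' := mem_Icc.mp hn
  have hΔt' : ∀ m ∈ Icc (n + 1) (N + 1), 0 < Δt m := fun m hm =>
    hΔt m (by simp only [mem_Icc] at hm ⊢; omega)
  have hW := workFrom_succ_le hF hn
  simp only [waterFillingAllocation]
  rw [sum_congr rfl fun m hm => div_mul_cancel₀ _ (hΔt' m hm).ne',
    sum_overlapLength_of_antitone hW (by omega)
      fun m hm => capacityFrom_succ_le hFmax (hΔt' m hm).le (mem_Icc.mp hm).2,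
    capacityFrom_of_lt (m := N + 1 + 1) (by omega), max_eq_right (hW.trans hcond),
    min_eq_left hcond, max_eq_left (workFrom_nonneg hF (by omega)), min_eq_right hW,
    workFrom_eq_add hn'.2, add_sub_cancel_right]

theorem isFeasibleAllocation_waterFillingAllocation (hF : ∀ n ∈ Icc 1 N, 0 ≤ F n)
    (hΔt : ∀ m ∈ Icc 2 (N + 1), 0 < Δt m) (hFmax : 0 ≤ Fmax)
    (hcond : ∀ n ∈ Icc 1 N, workFrom N F n ≤ capacityFrom N Fmax Δt (n + 1)) :
    IsFeasibleAllocation N Fmax F Δt (waterFillingAllocation N Fmax F Δt) := by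
  refine ⟨fun n hn m hm => ?_, fun m hm => sum_waterFillingAllocation_le hF hFmax (hΔt m hm) hm,
    fun n hn => (sum_waterFillingAllocation_mul_eq hF hΔt hFmax hn (hcond n hn)).ge⟩
  exact div_nonneg (overlapLength_nonneg ..)
    (hΔt m (by simp only [mem_Icc] at hn hm ⊢; omega)).le

end Allocation

/-- General feasibility of the asynchronous computation resource allocation:
nonnegative frequencies f_{n,m} satisfying the per-slot capacity constraints and
the completion constraints exist iff
F_max ≥ max_n (∑_{i=n}^{N} F_i)/(∑_{i=n+1}^{N+1} Δt_i). -/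
theorem stmt_5 (N : ℕ) (hN : 1 ≤ N) (Fmax : ℝ) (F Δt : ℕ → ℝ)
    (hF : ∀ n ∈ Finset.Icc 1 N, 0 < F n)
    (hΔt : ∀ m ∈ Finset.Icc 2 (N + 1), 0 < Δt m) :
    (∃ f : ℕ → ℕ → ℝ,
        (∀ n ∈ Finset.Icc 1 N, ∀ m ∈ Finset.Icc (n + 1) (N + 1), 0 ≤ f n m) ∧
        (∀ m ∈ Finset.Icc 2 (N + 1), ∑ n ∈ Finset.Icc 1 (m - 1), f n m ≤ Fmax) ∧
        (∀ n ∈ Finset.Icc 1 N,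
          F n ≤ ∑ m ∈ Finset.Icc (n + 1) (N + 1), f n m * Δt m)) ↔
      ∀ n ∈ Finset.Icc 1 N,
        (∑ i ∈ Finset.Icc n N, F i) / (∑ i ∈ Finset.Icc (n + 1) (N + 1), Δt i) ≤
          Fmax := by
  have hT : ∀ n ∈ Icc 1 N, 0 < ∑ i ∈ Icc (n + 1) (N + 1), Δt i := fun n hn =>
    sum_pos (fun i hi => hΔt i (by simp only [mem_Icc] at hi hn ⊢; omega))
      (nonempty_Icc.mpr (by simp only [mem_Icc] at hn; omega))
  have hF' : ∀ n ∈ Icc 1 N, 0 ≤ F n := fun n hn => (hF n hn).le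
  constructor
  · rintro ⟨f, hf⟩ n hn
    rw [div_le_iff₀ (hT n hn)]
    exact sum_Icc_le_mul_sum_Icc_of_isFeasibleAllocation N Fmax F Δt
      (fun m hm => (hΔt m hm).le) hf (mem_Icc.mp hn).1
  · intro hdiv
    have hcond : ∀ n ∈ Icc 1 N, workFrom N F n ≤ capacityFrom N Fmax Δt (n + 1) :=
      fun n hn => (div_le_iff₀ (hT n hn)).mp (hdiv n hn)
    have h1 : (1 : ℕ) ∈ Icc 1 N := mem_Icc.mpr ⟨le_rfl, hN⟩
    have hFmax : 0 ≤ Fmax := nonneg_of_mul_nonneg_left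
      ((workFrom_nonneg hF' le_rfl).trans (hcond 1 h1)) (hT 1 h1)
    exact ⟨_, isFeasibleAllocation_waterFillingAllocation hF' hΔt hFmax hcond⟩
end

section
/- In the setting of the previous feasibility problem, the minimum over all feasible frequency allocations of the maximum per-slot total frequency max_{m∈{2,…,N+1}} ∑_{n=1}^{m−1} f_{n,m}, subject only to the completion constraints ∑_{m=n+1}^{N+1} f_{n,m}·Δt_m ≥ F_n with f_{n,m} ≥ 0, equals max_{n∈{1,…,N}} (∑_{i=n}^{N} F_i)/(∑_{i=n+1}^{N+1} Δt_i). -/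
/-!
Write `G n = F n + ⋯ + F N` and `T m = Δt m + ⋯ + Δt (N + 1)`. Tasks `n, …, N` can only run in
slots `n + 1, …, N + 1`, so if no slot's total frequency exceeds `y` then `G n ≤ y * T (n + 1)`;
this is the lower bound. Conversely, let `c = max G n / T (n + 1)` and process all the work at
the constant rate `c`, ending at the end of the last slot and finishing the tasks in order of
increasing index. Task `n` then occupies the last `G n / c ≤ T (n + 1)` units of time, i.e. it
only runs in slots `n + 1, …, N + 1`; and since `c * Δt (N + 1) ≤ G 1`, the last slot runs at
rate `c` throughout.
-/

open Finset

-- The length of `[a, b] ∩ [c, d]`.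
def overlap (a b c d : ℝ) : ℝ := max 0 (min b d - max a c)

lemma overlap_comm (a b c d : ℝ) : overlap a b c d = overlap c d a b := by
  rw [overlap, overlap, min_comm b d, max_comm a c]

lemma overlap_nonneg (a b c d : ℝ) : 0 ≤ overlap a b c d := le_max_left _ _

lemma overlap_le_sub {a b : ℝ} (hab : a ≤ b) (c d : ℝ) : overlap a b c d ≤ b - a :=
  max_le (by linarith) (by linarith [min_le_left b d, le_max_left a c])

lemma overlap_eq_sub {a b c d : ℝ} (hab : a ≤ b) (hca : c ≤ a) (hbd : b ≤ d) :
    overlap a b c d = b - a := by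
  rw [overlap, min_eq_left hbd, max_eq_left hca, max_eq_right (by linarith)]

lemma overlap_add_overlap (a b : ℝ) {c d e : ℝ} (hcd : c ≤ d) (hde : d ≤ e) :
    overlap a b c d + overlap a b d e = overlap a b c e := by
  simp only [overlap, min_def, max_def]
  split_ifs <;> linarith

lemma sum_overlap_Icc (a b : ℝ) {s : ℕ → ℝ} {p q : ℕ} (hpq : p ≤ q)
    (hs : AntitoneOn s (Set.Icc p (q + 1))) :
    ∑ k ∈ Icc p q, overlap a b (s (k + 1)) (s k) = overlap a b (s (q + 1)) (s p) := by
  induction q, hpq using Nat.le_induction with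
  | base => rw [Icc_self, sum_singleton]
  | succ q hpq ih =>
    have mem : ∀ k, p ≤ k → k ≤ q + 2 → k ∈ Set.Icc p (q + 2) := fun k h₁ h₂ => ⟨h₁, h₂⟩
    rw [sum_Icc_succ_top (by omega), ih (hs.mono (Set.Icc_subset_Icc_right (by omega))),
      add_comm, overlap_add_overlap]
    · exact hs (mem (q + 1) (by omega) (by omega)) (mem (q + 2) (by omega) le_rfl) (by omega)
    · exact hs (mem p le_rfl (by omega)) (mem (q + 1) (by omega) (by omega)) (by omega)

lemma antitoneOn_sum_Icc {f : ℕ → ℝ} {a N : ℕ} (hf : ∀ i ∈ Icc a N, 0 ≤ f i) :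
    AntitoneOn (fun n => ∑ i ∈ Icc n N, f i) (Set.Ici a) :=
  fun _ hj _ _ hjk => sum_le_sum_of_subset_of_nonneg (Icc_subset_Icc_left hjk)
    fun i hi _ => hf i (Icc_subset_Icc_left hj hi)

def tailWork (F : ℕ → ℝ) (N n : ℕ) : ℝ := ∑ i ∈ Icc n N, F i

def tailTime (Δt : ℕ → ℝ) (N m : ℕ) : ℝ := ∑ i ∈ Icc m (N + 1), Δt i

section Schedule

variable {N n m : ℕ} {F Δt : ℕ → ℝ} {c : ℝ}

lemma tailWork_eq_add (hn : n ≤ N) : tailWork F N n = F n + tailWork F N (n + 1) := by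
  rw [tailWork, tailWork, Icc_add_one_left_eq_Ioc, add_sum_Ioc_eq_sum_Icc hn]

lemma tailTime_eq_add (hm : m ≤ N + 1) :
    tailTime Δt N m = Δt m + tailTime Δt N (m + 1) := by
  rw [tailTime, tailTime, Icc_add_one_left_eq_Ioc, add_sum_Ioc_eq_sum_Icc hm]

lemma tailWork_nonneg (hF : ∀ i ∈ Icc 1 N, 0 ≤ F i) (hn : 1 ≤ n) : 0 ≤ tailWork F N n :=
  sum_nonneg fun i hi => hF i (Icc_subset_Icc_left hn hi)

lemma tailWork_antitoneOn (hF : ∀ i ∈ Icc 1 N, 0 ≤ F i) :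
    AntitoneOn (tailWork F N) (Set.Ici 1) :=
  antitoneOn_sum_Icc hF

lemma tailTime_antitoneOn (hΔt : ∀ m ∈ Icc 2 (N + 1), 0 ≤ Δt m) :
    AntitoneOn (tailTime Δt N) (Set.Ici 2) :=
  antitoneOn_sum_Icc hΔt

lemma tailTime_last : tailTime Δt N (N + 1) = Δt (N + 1) := by
  rw [tailTime, Icc_self, sum_singleton]

lemma tailTime_pos (hΔt : ∀ m ∈ Icc 2 (N + 1), 0 < Δt m) (hn : n ∈ Icc 1 N) :
    0 < tailTime Δt N (n + 1) := by
  rw [mem_Icc] at hn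
  exact sum_pos (fun i hi => hΔt i (Icc_subset_Icc_left (by omega) hi))
    (nonempty_Icc.mpr (by omega))

lemma tailWork_le_mul_tailTime {f : ℕ → ℕ → ℝ} {y : ℝ}
    (hΔt : ∀ m ∈ Icc 2 (N + 1), 0 ≤ Δt m)
    (hf : ∀ n ∈ Icc 1 N, ∀ m ∈ Icc (n + 1) (N + 1), 0 ≤ f n m)
    (hfF : ∀ n ∈ Icc 1 N, F n ≤ ∑ m ∈ Icc (n + 1) (N + 1), f n m * Δt m)
    (hy : ∀ m ∈ Icc 2 (N + 1), ∑ i ∈ Icc 1 (m - 1), f i m ≤ y) (hn : 1 ≤ n) :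
    tailWork F N n ≤ y * tailTime Δt N (n + 1) := by
  have hΔt' : ∀ m ∈ Icc (n + 1) (N + 1), 0 ≤ Δt m :=
    fun m hm => hΔt m (Icc_subset_Icc_left (by omega) hm)
  calc tailWork F N n
      ≤ ∑ i ∈ Icc n N, ∑ m ∈ Icc (i + 1) (N + 1), f i m * Δt m :=
        sum_le_sum fun i hi => hfF i (Icc_subset_Icc_left hn hi)
    _ = ∑ m ∈ Icc (n + 1) (N + 1), ∑ i ∈ Icc n (m - 1), f i m * Δt m :=
        sum_comm' fun i m => by simp only [mem_Icc]; omega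
    _ ≤ ∑ m ∈ Icc (n + 1) (N + 1), (∑ i ∈ Icc 1 (m - 1), f i m) * Δt m := by
        refine sum_le_sum fun m hm => ?_
        rw [sum_mul]
        refine sum_le_sum_of_subset_of_nonneg (Icc_subset_Icc_left hn) fun i hi _ => ?_
        simp only [mem_Icc] at hi hm
        exact mul_nonneg (hf i (mem_Icc.2 ⟨hi.1, by omega⟩) m (mem_Icc.2 ⟨by omega, hm.2⟩))
          (hΔt' m (mem_Icc.2 hm))
    _ ≤ ∑ m ∈ Icc (n + 1) (N + 1), y * Δt m :=
        sum_le_sum fun m hm => mul_le_mul_of_nonneg_right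
          (hy m (Icc_subset_Icc_left (by omega) hm)) (hΔt' m hm)
    _ = y * tailTime Δt N (n + 1) := (mul_sum _ _ _).symm

/- Run the total work at the constant rate `c` so that it ends with the last slot: task `n`
is the work interval `[tailWork (n + 1), tailWork n]`, slot `m` the capacity interval
`[c * tailTime (m + 1), c * tailTime m]`, and task `n` receives their overlap in slot `m`. -/
noncomputable def schedule (F Δt : ℕ → ℝ) (N : ℕ) (c : ℝ) (n m : ℕ) : ℝ :=
  overlap (tailWork F N (n + 1)) (tailWork F N n)
    (c * tailTime Δt N (m + 1)) (c * tailTime Δt N m) / Δt m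

lemma schedule_nonneg (hm : 0 ≤ Δt m) : 0 ≤ schedule F Δt N c n m :=
  div_nonneg (overlap_nonneg _ _ _ _) hm

lemma sum_schedule_mul_eq (hF : ∀ i ∈ Icc 1 N, 0 ≤ F i)
    (hΔt : ∀ m ∈ Icc 2 (N + 1), 0 < Δt m) (hc : 0 ≤ c) (hn : n ∈ Icc 1 N)
    (hnc : tailWork F N n ≤ c * tailTime Δt N (n + 1)) :
    ∑ m ∈ Icc (n + 1) (N + 1), schedule F Δt N c n m * Δt m = F n := by
  rw [mem_Icc] at hn
  have hT : AntitoneOn (fun m => c * tailTime Δt N m) (Set.Icc (n + 1) (N + 1 + 1)) :=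
    fun j hj k hk hjk => mul_le_mul_of_nonneg_left (tailTime_antitoneOn
      (fun m hm => (hΔt m hm).le) (Set.mem_Ici.2 (by have := hj.1; omega))
      (Set.mem_Ici.2 (by have := hk.1; omega)) hjk) hc
  simp only [schedule]
  rw [sum_congr rfl fun m hm => div_mul_cancel₀ _
      (hΔt m (Icc_subset_Icc_left (by omega) hm)).ne',
    sum_overlap_Icc _ _ (by omega) hT, tailTime, Icc_eq_empty (by omega), sum_empty, mul_zero,
    overlap_eq_sub (tailWork_antitoneOn hF (Set.mem_Ici.2 hn.1) (Set.mem_Ici.2 (by omega))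
      (by omega)) (tailWork_nonneg hF (by omega)) hnc, tailWork_eq_add hn.2]
  ring

lemma sum_schedule_slot_eq (hF : ∀ i ∈ Icc 1 N, 0 ≤ F i) (hm : m ∈ Icc 2 (N + 1)) :
    ∑ n ∈ Icc 1 (m - 1), schedule F Δt N c n m =
      overlap (c * tailTime Δt N (m + 1)) (c * tailTime Δt N m)
        (tailWork F N m) (tailWork F N 1) / Δt m := by
  obtain ⟨k, rfl⟩ : ∃ k, m = k + 1 := ⟨m - 1, by rw [mem_Icc] at hm; omega⟩
  simp only [schedule, Nat.add_sub_cancel, ← sum_div, overlap_comm (tailWork F N _)]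
  rw [sum_overlap_Icc _ _ (by rw [mem_Icc] at hm; omega)
    ((tailWork_antitoneOn hF).mono fun k hk => Set.mem_Ici.2 hk.1)]

lemma sum_schedule_slot_le (hF : ∀ i ∈ Icc 1 N, 0 ≤ F i) (hΔt : ∀ m ∈ Icc 2 (N + 1), 0 < Δt m)
    (hc : 0 ≤ c) (hm : m ∈ Icc 2 (N + 1)) :
    ∑ n ∈ Icc 1 (m - 1), schedule F Δt N c n m ≤ c := by
  have hTm := tailTime_eq_add (Δt := Δt) (mem_Icc.1 hm).2
  rw [sum_schedule_slot_eq hF hm, div_le_iff₀ (hΔt m hm)]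
  calc _ ≤ c * tailTime Δt N m - c * tailTime Δt N (m + 1) :=
        overlap_le_sub (mul_le_mul_of_nonneg_left (by rw [hTm]; linarith [hΔt m hm]) hc) _ _
    _ = c * Δt m := by rw [hTm]; ring

lemma sum_schedule_last_slot (hN : 1 ≤ N) (hF : ∀ i ∈ Icc 1 N, 0 ≤ F i) (hΔt : 0 < Δt (N + 1))
    (hc : 0 ≤ c) (hlast : c * Δt (N + 1) ≤ tailWork F N 1) :
    ∑ n ∈ Icc 1 (N + 1 - 1), schedule F Δt N c n (N + 1) = c := by
  have hT : tailTime Δt N (N + 1 + 1) = 0 := by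
    rw [tailTime, Icc_eq_empty (by omega), sum_empty]
  have hG : tailWork F N (N + 1) = 0 := by
    rw [tailWork, Icc_eq_empty (by omega), sum_empty]
  rw [sum_schedule_slot_eq hF (mem_Icc.2 ⟨by omega, le_rfl⟩), tailTime_last, hT, hG, mul_zero,
    overlap_eq_sub (mul_nonneg hc hΔt.le) le_rfl hlast, sub_zero,
    mul_div_cancel_right₀ _ hΔt.ne']

lemma mul_last_le_tailWork_one (hF : ∀ i ∈ Icc 1 N, 0 ≤ F i)
    (hΔt : ∀ m ∈ Icc 2 (N + 1), 0 ≤ Δt m) (hc : 0 ≤ c) (hn : n ∈ Icc 1 N)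
    (hcn : c * tailTime Δt N (n + 1) = tailWork F N n) :
    c * Δt (N + 1) ≤ tailWork F N 1 := by
  rw [mem_Icc] at hn
  calc c * Δt (N + 1) = c * tailTime Δt N (N + 1) := by rw [tailTime_last]
    _ ≤ c * tailTime Δt N (n + 1) := mul_le_mul_of_nonneg_left
        (tailTime_antitoneOn hΔt (Set.mem_Ici.2 (by omega)) (Set.mem_Ici.2 (by omega))
          (by omega)) hc
    _ = tailWork F N n := hcn
    _ ≤ tailWork F N 1 := tailWork_antitoneOn hF Set.self_mem_Ici hn.1 hn.1

end Schedule

/-- The minimum over all allocations meeting the completion constraints of the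
maximum per-slot total frequency equals
max_{n} (∑_{i=n}^{N} F_i)/(∑_{i=n+1}^{N+1} Δt_i).  Stated as: this threshold is
attainable as an upper bound on every slot's total for some feasible allocation,
and every feasible allocation has some slot whose total reaches the threshold. -/
theorem stmt_6 (N : ℕ) (hN : 1 ≤ N) (F Δt : ℕ → ℝ)
    (hF : ∀ n ∈ Finset.Icc 1 N, 0 < F n)
    (hΔt : ∀ m ∈ Finset.Icc 2 (N + 1), 0 < Δt m) :
    IsLeast
      {y : ℝ | ∃ f : ℕ → ℕ → ℝ,
        (∀ n ∈ Finset.Icc 1 N, ∀ m ∈ Finset.Icc (n + 1) (N + 1), 0 ≤ f n m) ∧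
        (∀ n ∈ Finset.Icc 1 N,
          F n ≤ ∑ m ∈ Finset.Icc (n + 1) (N + 1), f n m * Δt m) ∧
        y = (Finset.Icc 2 (N + 1)).sup'
            (Finset.nonempty_Icc.mpr (by omega))
            (fun m => ∑ n ∈ Finset.Icc 1 (m - 1), f n m)}
      ((Finset.Icc 1 N).sup' (Finset.nonempty_Icc.mpr hN)
        (fun n => (∑ i ∈ Finset.Icc n N, F i) /
          (∑ i ∈ Finset.Icc (n + 1) (N + 1), Δt i))) := by
  set c := (Finset.Icc 1 N).sup' _ fun n => tailWork F N n / tailTime Δt N (n + 1)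
  have hF₀ : ∀ n ∈ Icc 1 N, 0 ≤ F n := fun n hn => (hF n hn).le
  have hcn : ∀ n ∈ Icc 1 N, tailWork F N n ≤ c * tailTime Δt N (n + 1) := fun n hn =>
    (div_le_iff₀ (tailTime_pos hΔt hn)).1
      (le_sup' (fun n => tailWork F N n / tailTime Δt N (n + 1)) hn)
  have hc : 0 ≤ c := le_sup'_of_le _ (right_mem_Icc.2 hN)
    (div_nonneg (tailWork_nonneg hF₀ hN) (tailTime_pos hΔt (right_mem_Icc.2 hN)).le)
  have hΔtN : 0 < Δt (N + 1) := hΔt _ (right_mem_Icc.2 (by omega))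
  have hlast : c * Δt (N + 1) ≤ tailWork F N 1 := by
    obtain ⟨k, hk, hck⟩ : ∃ k ∈ Icc 1 N, c = tailWork F N k / tailTime Δt N (k + 1) :=
      exists_mem_eq_sup' _ _
    exact mul_last_le_tailWork_one hF₀ (fun m hm => (hΔt m hm).le) hc hk
      (by rw [hck, div_mul_cancel₀ _ (tailTime_pos hΔt hk).ne'])
  refine ⟨⟨schedule F Δt N c, ?_, ?_, ?_⟩, ?_⟩
  · intro n hn m hm
    exact schedule_nonneg (hΔt m (Icc_subset_Icc_left
      (by have := (mem_Icc.1 hn).1; omega) hm)).le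
  · exact fun n hn => (sum_schedule_mul_eq hF₀ hΔt hc hn (hcn n hn)).ge
  · exact le_antisymm (le_sup'_of_le _ (right_mem_Icc.2 (by omega))
      (sum_schedule_last_slot hN hF₀ hΔtN hc hlast).ge)
      (sup'_le _ _ fun m hm => sum_schedule_slot_le hF₀ hΔt hc hm)
  · rintro y ⟨f, hf, hfF, rfl⟩
    exact sup'_le _ _ fun n hn => (div_le_iff₀ (tailTime_pos hΔt hn)).2
      (tailWork_le_mul_tailTime (fun m hm => (hΔt m hm).le) hf hfF
        (fun m hm => le_sup' (fun m => ∑ i ∈ Icc 1 (m - 1), f i m) hm) (mem_Icc.1 hn).1)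
end

section
/- The necessity direction of the feasibility condition: if nonnegative frequencies f_{n,m} (1 ≤ n ≤ N, n+1 ≤ m ≤ N+1) satisfy ∑_{n=1}^{m−1} f_{n,m} ≤ F_max for all m and ∑_{m=n+1}^{N+1} f_{n,m}·Δt_m ≥ F_n for all n, then for every k ∈ {1,…,N}: ∑_{i=k}^{N} F_i ≤ F_max · ∑_{i=k+1}^{N+1} Δt_i. -/
/-!
Add up the completion constraints of tasks `k, …, N` and exchange the order of summation over
the triangle `k ≤ i < m ≤ N + 1`. Slot `m` then receives work only from tasks `k, …, m - 1`,
a subset of the tasks in its capacity constraint; as frequencies are nonnegative this load is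
at most `Fmax`, so the total is at most `Fmax · ∑ Δt m`.
-/

open Finset

theorem sum_Icc_sum_Icc_succ_comm {M : Type*} [AddCommMonoid M] (k N : ℕ) (g : ℕ → ℕ → M) :
    ∑ i ∈ Icc k N, ∑ m ∈ Icc (i + 1) (N + 1), g i m =
      ∑ m ∈ Icc (k + 1) (N + 1), ∑ i ∈ Icc k (m - 1), g i m :=
  sum_comm' fun i m => by simp only [mem_Icc]; omega

theorem stmt_7_general (N : ℕ) (Fmax : ℝ) (F Δt : ℕ → ℝ)
    (hΔt : ∀ m ∈ Finset.Icc 2 (N + 1), 0 < Δt m)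
    (f : ℕ → ℕ → ℝ)
    (hf0 : ∀ n ∈ Finset.Icc 1 N, ∀ m ∈ Finset.Icc (n + 1) (N + 1), 0 ≤ f n m)
    (hcap : ∀ m ∈ Finset.Icc 2 (N + 1), ∑ n ∈ Finset.Icc 1 (m - 1), f n m ≤ Fmax)
    (hcomp : ∀ n ∈ Finset.Icc 1 N,
      F n ≤ ∑ m ∈ Finset.Icc (n + 1) (N + 1), f n m * Δt m) :
    ∀ k ∈ Finset.Icc 1 N,
      ∑ i ∈ Finset.Icc k N, F i ≤ Fmax * ∑ i ∈ Finset.Icc (k + 1) (N + 1), Δt i := by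
  intro k hk
  rw [mem_Icc] at hk
  have hslot : ∀ m ∈ Icc (k + 1) (N + 1), m ∈ Icc 2 (N + 1) := fun m hm => by
    rw [mem_Icc] at hm ⊢; omega
  have hload : ∀ m ∈ Icc (k + 1) (N + 1), ∑ i ∈ Icc k (m - 1), f i m ≤ Fmax := fun m hm =>
    calc ∑ i ∈ Icc k (m - 1), f i m
        ≤ ∑ i ∈ Icc 1 (m - 1), f i m := by
          refine sum_le_sum_of_subset_of_nonneg (Icc_subset_Icc_left hk.1) fun i hi _ => ?_
          rw [mem_Icc] at hm hi
          exact hf0 i (mem_Icc.2 ⟨hi.1, by omega⟩) m (mem_Icc.2 ⟨by omega, hm.2⟩)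
      _ ≤ Fmax := hcap m (hslot m hm)
  calc ∑ i ∈ Icc k N, F i
      ≤ ∑ i ∈ Icc k N, ∑ m ∈ Icc (i + 1) (N + 1), f i m * Δt m :=
        sum_le_sum fun i hi => hcomp i (Icc_subset_Icc_left hk.1 hi)
    _ = ∑ m ∈ Icc (k + 1) (N + 1), (∑ i ∈ Icc k (m - 1), f i m) * Δt m := by
        simp only [sum_Icc_sum_Icc_succ_comm, sum_mul]
    _ ≤ ∑ m ∈ Icc (k + 1) (N + 1), Fmax * Δt m :=
        sum_le_sum fun m hm =>
          mul_le_mul_of_nonneg_right (hload m hm) (hΔt m (hslot m hm)).le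
    _ = Fmax * ∑ m ∈ Icc (k + 1) (N + 1), Δt m := (mul_sum ..).symm

/-- Necessity direction of the feasibility condition: a feasible allocation
implies ∑_{i=k}^{N} F_i ≤ F_max · ∑_{i=k+1}^{N+1} Δt_i for every k. -/
theorem stmt_7 (N : ℕ) (hN : 1 ≤ N) (Fmax : ℝ) (F Δt : ℕ → ℝ)
    (hF : ∀ n ∈ Finset.Icc 1 N, 0 < F n)
    (hΔt : ∀ m ∈ Finset.Icc 2 (N + 1), 0 < Δt m)
    (f : ℕ → ℕ → ℝ)
    (hf0 : ∀ n ∈ Finset.Icc 1 N, ∀ m ∈ Finset.Icc (n + 1) (N + 1), 0 ≤ f n m)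
    (hcap : ∀ m ∈ Finset.Icc 2 (N + 1), ∑ n ∈ Finset.Icc 1 (m - 1), f n m ≤ Fmax)
    (hcomp : ∀ n ∈ Finset.Icc 1 N,
      F n ≤ ∑ m ∈ Finset.Icc (n + 1) (N + 1), f n m * Δt m) :
    ∀ k ∈ Finset.Icc 1 N,
      ∑ i ∈ Finset.Icc k N, F i ≤ Fmax * ∑ i ∈ Finset.Icc (k + 1) (N + 1), Δt i :=
  stmt_7_general N Fmax F Δt hΔt f hf0 hcap hcomp
end

section
/- Row monotonicity of the optimal allocation: in any optimal solution of minimizing ∑_{n,m} κ·f_{n,m}³·Δt_m subject to the per-slot capacity constraints ∑_{n=1}^{m−1} f_{n,m} ≤ F_max, completion constraints ∑_{m=n+1}^{N+1} f_{n,m}·Δt_m ≥ F_n, and f_{n,m} ≥ 0, the frequencies allocated to each task are nonincreasing over time: f*_{n,n+1} ≥ f*_{n,n+2} ≥ ⋯ ≥ f*_{n,N+1} for every n ∈ {1,…,N}. -/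
open Finset in
/-- Feasibility of a frequency allocation for the asynchronous MEC problem. -/
def FeasibleAlloc (N : ℕ) (Fmax : ℝ) (F Δt : ℕ → ℝ) (f : ℕ → ℕ → ℝ) : Prop :=
  (∀ n ∈ Icc 1 N, ∀ m ∈ Icc (n + 1) (N + 1), 0 ≤ f n m) ∧
  (∀ m ∈ Icc 2 (N + 1), ∑ n ∈ Icc 1 (m - 1), f n m ≤ Fmax) ∧
  (∀ n ∈ Icc 1 N, F n ≤ ∑ m ∈ Icc (n + 1) (N + 1), f n m * Δt m)

open Finset in
/-- Total server energy of an allocation. -/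
def allocEnergy (N : ℕ) (κ : ℝ) (Δt : ℕ → ℝ) (f : ℕ → ℕ → ℝ) : ℝ :=
  ∑ n ∈ Icc 1 N, ∑ m ∈ Icc (n + 1) (N + 1), κ * f n m ^ 3 * Δt m

/-!
Suppose `f n m < f n (m + 1)` for an optimal `f`. Moving work of task `n` from slot `m + 1` to
slot `m` while keeping `f n m * Δt m + f n (m + 1) * Δt (m + 1)` fixed brings the two frequencies
closer, which strictly lowers `Δt m * x ^ 3 + Δt (m + 1) * y ^ 3` by convexity of the cube.
The move is admissible if slot `m` has spare capacity. Otherwise slot `m` is full; as the tasks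
sharing it use at most `Fmax` of slot `m + 1`, one of them, `n'`, runs faster in slot `m` than in
slot `m + 1`, and the opposite move on `n'` keeps both slot loads unchanged and does not raise
the energy of `n'`.
-/

open Finset

theorem weighted_cube_lt {p q u u' v v' : ℝ} (hp : 0 < p) (hu : 0 ≤ u)
    (huu' : u < u') (hu'v' : u' ≤ v') (hv'v : v' ≤ v) (hmass : p * u' + q * v' = p * u + q * v) :
    p * u' ^ 3 + q * v' ^ 3 < p * u ^ 3 + q * v ^ 3 := by
  have hshift : q * (v - v') = p * (u' - u) := by linarith
  have hsq : u' ^ 2 + u' * u + u ^ 2 < v' ^ 2 + v' * v + v ^ 2 := by nlinarith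
  calc p * u' ^ 3 + q * v' ^ 3
      = p * u ^ 3 + q * v ^ 3 + p * (u' - u) * (u' ^ 2 + u' * u + u ^ 2)
          - q * (v - v') * (v' ^ 2 + v' * v + v ^ 2) := by ring
    _ < p * u ^ 3 + q * v ^ 3 := by
      rw [hshift]
      nlinarith [mul_lt_mul_of_pos_left hsq (mul_pos hp (sub_pos.2 huu'))]

theorem weighted_cube_le {p q u u' v v' : ℝ} (hp : 0 < p) (hq : 0 < q) (hu : 0 ≤ u)
    (huu' : u ≤ u') (hu'v' : u' ≤ v') (hv'v : v' ≤ v) (hmass : p * u' + q * v' = p * u + q * v) :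
    p * u' ^ 3 + q * v' ^ 3 ≤ p * u ^ 3 + q * v ^ 3 := by
  rcases huu'.eq_or_lt with rfl | huu'
  · obtain rfl : v' = v := mul_left_cancel₀ hq.ne' (by linarith)
    rfl
  · exact (weighted_cube_lt hp hu huu' hu'v' hv'v hmass).le

section Transfer

variable {N : ℕ} {κ Fmax : ℝ} {F Δt : ℕ → ℝ} {f : ℕ → ℕ → ℝ} {n m : ℕ} {t : ℝ}

def transferShift (Δt : ℕ → ℝ) (m j : ℕ) : ℝ :=
  (if j = m then Δt (m + 1) else 0) - (if j = m + 1 then Δt m else 0)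

/-- Raising `f n m` by `t * Δt (m + 1)` and lowering `f n (m + 1)` by `t * Δt m` leaves the work
done on task `n` unchanged. -/
def rowTransfer (Δt : ℕ → ℝ) (n m : ℕ) (t : ℝ) (f : ℕ → ℕ → ℝ) : ℕ → ℕ → ℝ :=
  fun i j => f i j + if i = n then t * transferShift Δt m j else 0

theorem transferShift_eq_zero {j : ℕ} (hm : j ≠ m) (hm1 : j ≠ m + 1) :
    transferShift Δt m j = 0 := by
  simp [transferShift, hm, hm1]

theorem transferShift_self : transferShift Δt m m = Δt (m + 1) := by
  simp [transferShift]

theorem transferShift_nonpos {j : ℕ} (hj : j ≠ m) (hΔ : 0 ≤ Δt m) : transferShift Δt m j ≤ 0 := by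
  unfold transferShift
  split_ifs <;> simp_all

theorem rowTransfer_apply_left : rowTransfer Δt n m t f n m = f n m + t * Δt (m + 1) := by
  simp [rowTransfer, transferShift]

theorem rowTransfer_apply_right :
    rowTransfer Δt n m t f n (m + 1) = f n (m + 1) - t * Δt m := by
  simp [rowTransfer, transferShift, sub_eq_add_neg]

theorem rowTransfer_of_ne_row {i : ℕ} (j : ℕ) (hi : i ≠ n) :
    rowTransfer Δt n m t f i j = f i j := by
  simp [rowTransfer, hi]

theorem rowTransfer_of_ne_col (i : ℕ) {j : ℕ} (hm : j ≠ m) (hm1 : j ≠ m + 1) :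
    rowTransfer Δt n m t f i j = f i j := by
  simp [rowTransfer, transferShift_eq_zero hm hm1]

theorem rowTransfer_nonneg {i j : ℕ} (hf : 0 ≤ f i j) (hleft : 0 ≤ f n m + t * Δt (m + 1))
    (hright : 0 ≤ f n (m + 1) - t * Δt m) : 0 ≤ rowTransfer Δt n m t f i j := by
  by_cases hi : i = n
  · subst hi
    by_cases hm : j = m
    · rwa [hm, rowTransfer_apply_left]
    by_cases hm1 : j = m + 1
    · rwa [hm1, rowTransfer_apply_right]
    rwa [rowTransfer_of_ne_col i hm hm1]
  · rwa [rowTransfer_of_ne_row j hi]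

theorem sum_rowTransfer (s : Finset ℕ) (j : ℕ) :
    ∑ i ∈ s, rowTransfer Δt n m t f i j
      = ∑ i ∈ s, f i j + if n ∈ s then t * transferShift Δt m j else 0 := by
  simp [rowTransfer, sum_add_distrib]

theorem sum_rowTransfer_mul (hnm : n < m) (hmN : m ≤ N) (i : ℕ) :
    ∑ j ∈ Icc (i + 1) (N + 1), rowTransfer Δt n m t f i j * Δt j
      = ∑ j ∈ Icc (i + 1) (N + 1), f i j * Δt j := by
  by_cases hi : i = n
  · have hm : m ∈ Icc (i + 1) (N + 1) := by simp only [mem_Icc]; omega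
    have hm1 : m + 1 ∈ Icc (i + 1) (N + 1) := by simp only [mem_Icc]; omega
    simp [rowTransfer, transferShift, hi.symm, add_mul, mul_sub, sub_mul, ite_mul,
      sum_add_distrib, sum_sub_distrib, hm, hm1]
    ring
  · simp [rowTransfer_of_ne_row _ hi]

theorem allocEnergy_rowTransfer_sub (hn : n ∈ Icc 1 N) (hnm : n < m) (hmN : m ≤ N) :
    allocEnergy N κ Δt (rowTransfer Δt n m t f) - allocEnergy N κ Δt f
      = κ * ((Δt m * (f n m + t * Δt (m + 1)) ^ 3 + Δt (m + 1) * (f n (m + 1) - t * Δt m) ^ 3)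
          - (Δt m * f n m ^ 3 + Δt (m + 1) * f n (m + 1) ^ 3)) := by
  unfold allocEnergy
  rw [← sum_sub_distrib, sum_eq_single_of_mem n hn fun i _ hi => by
    simp [rowTransfer_of_ne_row _ hi], ← sum_sub_distrib,
    sum_eq_add_of_mem m (m + 1) (by simp; omega) (by simp; omega) (by omega) fun j _ hj => by
      simp [rowTransfer_of_ne_col n hj.1 hj.2],
    rowTransfer_apply_left, rowTransfer_apply_right]
  ring

theorem allocEnergy_rowTransfer_lt (hκ : 0 < κ) (hΔm : 0 < Δt m) (hΔm1 : 0 < Δt (m + 1))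
    (hn : n ∈ Icc 1 N) (hnm : n < m) (hmN : m ≤ N) (hf : 0 ≤ f n m) (ht : 0 < t)
    (hgap : t * (Δt m + Δt (m + 1)) ≤ f n (m + 1) - f n m) :
    allocEnergy N κ Δt (rowTransfer Δt n m t f) < allocEnergy N κ Δt f := by
  have hcube := weighted_cube_lt hΔm hf (q := Δt (m + 1)) (u' := f n m + t * Δt (m + 1))
    (v' := f n (m + 1) - t * Δt m) (v := f n (m + 1)) (by nlinarith) (by linarith) (by nlinarith)
    (by ring)
  rw [← sub_neg, allocEnergy_rowTransfer_sub hn hnm hmN]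
  exact mul_neg_of_pos_of_neg hκ (sub_neg.2 hcube)

theorem allocEnergy_rowTransfer_neg_le (hκ : 0 < κ) (hΔm : 0 < Δt m) (hΔm1 : 0 < Δt (m + 1))
    (hn : n ∈ Icc 1 N) (hnm : n < m) (hmN : m ≤ N) (hf : 0 ≤ f n (m + 1)) (ht : 0 ≤ t)
    (hgap : t * (Δt m + Δt (m + 1)) ≤ f n m - f n (m + 1)) :
    allocEnergy N κ Δt (rowTransfer Δt n m (-t) f) ≤ allocEnergy N κ Δt f := by
  have hcube := weighted_cube_le hΔm1 hΔm hf (u' := f n (m + 1) - -t * Δt m)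
    (v' := f n m + -t * Δt (m + 1)) (v := f n m) (by nlinarith) (by linarith) (by nlinarith)
    (by ring)
  rw [← sub_nonpos, allocEnergy_rowTransfer_sub hn hnm hmN]
  exact mul_nonpos_of_nonneg_of_nonpos hκ.le (by linarith)

theorem sum_rowTransfer_neg_rowTransfer {n' : ℕ} (hn : n ∈ Icc 1 (m - 1))
    (hn' : n' ∈ Icc 1 (m - 1)) (j : ℕ) :
    ∑ i ∈ Icc 1 (j - 1), rowTransfer Δt n' m (-t) (rowTransfer Δt n m t f) i j
      = ∑ i ∈ Icc 1 (j - 1), f i j := by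
  rw [sum_rowTransfer, sum_rowTransfer]
  by_cases hj : j = m ∨ j = m + 1
  · have hmem : ∀ k ∈ Icc 1 (m - 1), k ∈ Icc 1 (j - 1) := by
      intro k hk; simp only [mem_Icc] at hk ⊢; omega
    simp [hmem n hn, hmem n' hn']
  · rw [not_or] at hj
    simp [transferShift_eq_zero hj.1 hj.2]

theorem exists_lt_allocEnergy_of_swap {n' : ℕ} (hf : FeasibleAlloc N Fmax F Δt f) (hκ : 0 < κ)
    (hΔm : 0 < Δt m) (hΔm1 : 0 < Δt (m + 1)) (hmN : m ≤ N) (hn : n ∈ Icc 1 (m - 1))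
    (hn' : n' ∈ Icc 1 (m - 1)) (hlt : f n m < f n (m + 1)) (hlt' : f n' (m + 1) < f n' m) :
    ∃ g, FeasibleAlloc N Fmax F Δt g ∧ allocEnergy N κ Δt g < allocEnergy N κ Δt f := by
  obtain ⟨hpos, hcap, hwork⟩ := hf
  have hD : 0 < Δt m + Δt (m + 1) := by linarith
  set t := min (f n (m + 1) - f n m) (f n' m - f n' (m + 1)) / (Δt m + Δt (m + 1))
  have ht : 0 < t := div_pos (lt_min (by linarith) (by linarith)) hD
  have htD : t * (Δt m + Δt (m + 1)) = min (f n (m + 1) - f n m) (f n' m - f n' (m + 1)) :=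
    div_mul_cancel₀ _ hD.ne'
  have hgap := htD.trans_le (min_le_left _ _)
  have hgap' := htD.trans_le (min_le_right _ _)
  have hnn' : n' ≠ n := by rintro rfl; linarith
  have := mem_Icc.1 hn
  have := mem_Icc.1 hn'
  have hnN : n ∈ Icc 1 N := by simp only [mem_Icc]; omega
  have hn'N : n' ∈ Icc 1 N := by simp only [mem_Icc]; omega
  have hn0 : 0 ≤ f n m := hpos n hnN m (by simp only [mem_Icc]; omega)
  have hn'0 : 0 ≤ f n' (m + 1) := hpos n' hn'N (m + 1) (by simp only [mem_Icc]; omega)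
  refine ⟨rowTransfer Δt n' m (-t) (rowTransfer Δt n m t f), ⟨?_, ?_, ?_⟩, ?_⟩
  · intro i hi j hj
    refine rowTransfer_nonneg (rowTransfer_nonneg (hpos i hi j hj) (by nlinarith) (by nlinarith))
      ?_ ?_ <;> rw [rowTransfer_of_ne_row _ hnn'] <;> nlinarith
  · intro j hj
    rw [sum_rowTransfer_neg_rowTransfer hn hn']
    exact hcap j hj
  · intro i hi
    rw [sum_rowTransfer_mul (by omega) hmN, sum_rowTransfer_mul (by omega) hmN]
    exact hwork i hi
  · calc allocEnergy N κ Δt (rowTransfer Δt n' m (-t) (rowTransfer Δt n m t f))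
        ≤ allocEnergy N κ Δt (rowTransfer Δt n m t f) := by
          refine allocEnergy_rowTransfer_neg_le hκ hΔm hΔm1 hn'N (by omega) hmN ?_ ht.le ?_ <;>
            simp only [rowTransfer_of_ne_row _ hnn'] <;> assumption
      _ < allocEnergy N κ Δt f :=
          allocEnergy_rowTransfer_lt hκ hΔm hΔm1 hnN (by omega) hmN hn0 ht hgap

theorem exists_lt_allocEnergy_of_slack (hf : FeasibleAlloc N Fmax F Δt f) (hκ : 0 < κ)
    (hΔm : 0 < Δt m) (hΔm1 : 0 < Δt (m + 1)) (hmN : m ≤ N) (hn : n ∈ Icc 1 (m - 1))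
    (hlt : f n m < f n (m + 1)) (hslack : ∑ i ∈ Icc 1 (m - 1), f i m < Fmax) :
    ∃ g, FeasibleAlloc N Fmax F Δt g ∧ allocEnergy N κ Δt g < allocEnergy N κ Δt f := by
  obtain ⟨hpos, hcap, hwork⟩ := hf
  have hD : 0 < Δt m + Δt (m + 1) := by linarith
  set t := min ((f n (m + 1) - f n m) / (Δt m + Δt (m + 1)))
    ((Fmax - ∑ i ∈ Icc 1 (m - 1), f i m) / Δt (m + 1))
  have ht : 0 < t := lt_min (div_pos (by linarith) hD) (div_pos (by linarith) hΔm1)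
  have hgap : t * (Δt m + Δt (m + 1)) ≤ f n (m + 1) - f n m :=
    (le_div_iff₀ hD).1 (min_le_left _ _)
  have hroom : t * Δt (m + 1) ≤ Fmax - ∑ i ∈ Icc 1 (m - 1), f i m :=
    (le_div_iff₀ hΔm1).1 (min_le_right _ _)
  have hnN : n ∈ Icc 1 N := by simp only [mem_Icc] at hn ⊢; omega
  have hnm : n < m := by simp only [mem_Icc] at hn; omega
  have hn0 : 0 ≤ f n m := hpos n hnN m (by simp only [mem_Icc]; omega)
  refine ⟨rowTransfer Δt n m t f, ⟨?_, ?_, ?_⟩,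
    allocEnergy_rowTransfer_lt hκ hΔm hΔm1 hnN hnm hmN hn0 ht hgap⟩
  · intro i hi j hj
    exact rowTransfer_nonneg (hpos i hi j hj) (by nlinarith) (by nlinarith)
  · intro j hj
    rw [sum_rowTransfer]
    by_cases hjm : j = m
    · subst hjm
      simp only [hn, if_true, transferShift_self]
      linarith
    · have := mul_nonpos_of_nonneg_of_nonpos ht.le (transferShift_nonpos hjm hΔm.le)
      have := hcap j hj
      split_ifs <;> linarith
  · intro i hi
    rw [sum_rowTransfer_mul hnm hmN]
    exact hwork i hi

theorem sum_lt_capacity_of_le_next (hf : FeasibleAlloc N Fmax F Δt f) (hmN : m ≤ N)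
    (hn : n ∈ Icc 1 (m - 1)) (hlt : f n m < f n (m + 1))
    (hle : ∀ i ∈ Icc 1 (m - 1), f i m ≤ f i (m + 1)) :
    ∑ i ∈ Icc 1 (m - 1), f i m < Fmax := by
  obtain ⟨hpos, hcap, -⟩ := hf
  have hm : 2 ≤ m := by simp only [mem_Icc] at hn; omega
  calc ∑ i ∈ Icc 1 (m - 1), f i m
      < ∑ i ∈ Icc 1 (m - 1), f i (m + 1) := sum_lt_sum hle ⟨n, hn, hlt⟩
    _ ≤ ∑ i ∈ Icc 1 m, f i (m + 1) := by
      refine sum_le_sum_of_subset_of_nonneg (Icc_subset_Icc_right (by omega)) fun i hi _ => ?_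
      simp only [mem_Icc] at hi
      exact hpos i (by simp only [mem_Icc]; omega) (m + 1) (by simp only [mem_Icc]; omega)
    _ ≤ Fmax := by simpa using hcap (m + 1) (by simp only [mem_Icc]; omega)

end Transfer

theorem stmt_10_general (N : ℕ) (κ Fmax : ℝ) (hκ : 0 < κ) (F Δt : ℕ → ℝ)
    (hΔt : ∀ m ∈ Finset.Icc 2 (N + 1), 0 < Δt m)
    (f : ℕ → ℕ → ℝ) (hf : FeasibleAlloc N Fmax F Δt f)
    (hopt : ∀ g : ℕ → ℕ → ℝ, FeasibleAlloc N Fmax F Δt g →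
      allocEnergy N κ Δt f ≤ allocEnergy N κ Δt g) :
    ∀ n ∈ Finset.Icc 1 N, ∀ m ∈ Finset.Icc (n + 1) N, f n (m + 1) ≤ f n m := by
  intro n hn m hm
  simp only [mem_Icc] at hn hm
  have hnm : n ∈ Icc 1 (m - 1) := by simp only [mem_Icc]; omega
  have hΔm : 0 < Δt m := hΔt m (by simp only [mem_Icc]; omega)
  have hΔm1 : 0 < Δt (m + 1) := hΔt (m + 1) (by simp only [mem_Icc]; omega)
  by_contra! hlt
  obtain ⟨g, hg, hlt'⟩ :
      ∃ g, FeasibleAlloc N Fmax F Δt g ∧ allocEnergy N κ Δt g < allocEnergy N κ Δt f := by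
    by_cases hswap : ∃ n' ∈ Icc 1 (m - 1), f n' (m + 1) < f n' m
    · obtain ⟨k, hkm, hk⟩ := hswap
      exact exists_lt_allocEnergy_of_swap hf hκ hΔm hΔm1 hm.2 hnm hkm hlt hk
    · push Not at hswap
      exact exists_lt_allocEnergy_of_slack hf hκ hΔm hΔm1 hm.2 hnm hlt
        (sum_lt_capacity_of_le_next hf hm.2 hnm hlt hswap)
  exact (hopt g hg).not_gt hlt'

/-- Row monotonicity: in any optimal allocation, the frequency allocated to each
task is nonincreasing over its computation slots. -/
theorem stmt_10 (N : ℕ) (hN : 1 ≤ N) (κ Fmax : ℝ) (hκ : 0 < κ) (F Δt : ℕ → ℝ)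
    (hF : ∀ n ∈ Finset.Icc 1 N, 0 < F n)
    (hΔt : ∀ m ∈ Finset.Icc 2 (N + 1), 0 < Δt m)
    (hfeas : ∀ n ∈ Finset.Icc 1 N,
      (∑ i ∈ Finset.Icc n N, F i) / (∑ i ∈ Finset.Icc (n + 1) (N + 1), Δt i) ≤ Fmax)
    (f : ℕ → ℕ → ℝ) (hf : FeasibleAlloc N Fmax F Δt f)
    (hopt : ∀ g : ℕ → ℕ → ℝ, FeasibleAlloc N Fmax F Δt g →
      allocEnergy N κ Δt f ≤ allocEnergy N κ Δt g) :
    ∀ n ∈ Finset.Icc 1 N, ∀ m ∈ Finset.Icc (n + 1) N, f n (m + 1) ≤ f n m :=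
  stmt_10_general N κ Fmax hκ F Δt hΔt f hf hopt
end

section
/- Abundant-resource case: if F_max ≥ ∑_{n=1}^{N} F_n/(∑_{m=n+1}^{N+1} Δt_m), then the allocation f_{n,m} = F_n/(∑_{m'=n+1}^{N+1} Δt_{m'}) for all m ∈ {n+1,…,N+1} is feasible (it satisfies the per-slot capacity and completion constraints) and achieves energy ∑_{n=1}^{N} κ·F_n³/(∑_{m=n+1}^{N+1} Δt_m)², which is the global minimum of the energy over all feasible allocations. -/
open Finset

theorem pow_sum_mul_le_pow_sum_mul_sum_mul_pow {ι : Type*} (s : Finset ι) {w z : ι → ℝ}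
    (hw : ∀ i ∈ s, 0 ≤ w i) (hz : ∀ i ∈ s, 0 ≤ z i) (n : ℕ) :
    (∑ i ∈ s, w i * z i) ^ (n + 1) ≤ (∑ i ∈ s, w i) ^ n * ∑ i ∈ s, w i * z i ^ (n + 1) := by
  set W := ∑ i ∈ s, w i
  rcases (sum_nonneg hw).eq_or_lt with hW | hW
  · have hw0 : ∀ i ∈ s, w i = 0 := (sum_eq_zero_iff_of_nonneg hw).1 hW.symm
    have hsum_zero : ∀ g : ι → ℝ, ∑ i ∈ s, w i * g i = 0 := fun g =>
      sum_eq_zero fun i hi => by simp [hw0 i hi]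
    simp [hsum_zero]
  · have hmean := Real.pow_arith_mean_le_arith_mean_pow s (fun i => w i / W) z
      (fun i hi => div_nonneg (hw i hi) hW.le) (by rw [← sum_div, div_self hW.ne']) hz (n + 1)
    simp only [div_mul_eq_mul_div, ← sum_div, div_pow] at hmean
    rw [div_le_div_iff₀ (by positivity) hW, pow_succ W] at hmean
    exact le_of_mul_le_mul_right (by linarith) hW

theorem pow_succ_div_pow_le_sum_mul_pow {ι : Type*} {s : Finset ι} {w z : ι → ℝ} {a : ℝ}
    (hw : ∀ i ∈ s, 0 ≤ w i) (hz : ∀ i ∈ s, 0 ≤ z i) (ha : 0 ≤ a)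
    (haz : a ≤ ∑ i ∈ s, w i * z i) (n : ℕ) :
    a ^ (n + 1) / (∑ i ∈ s, w i) ^ n ≤ ∑ i ∈ s, w i * z i ^ (n + 1) := by
  refine div_le_of_le_mul₀ (pow_nonneg (sum_nonneg hw) n)
    (sum_nonneg fun i hi => mul_nonneg (hw i hi) (pow_nonneg (hz i hi) _)) ?_
  calc a ^ (n + 1) ≤ (∑ i ∈ s, w i * z i) ^ (n + 1) := by gcongr
    _ ≤ _ := by
      rw [mul_comm]
      exact pow_sum_mul_le_pow_sum_mul_sum_mul_pow s hw hz n

noncomputable section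

def availableTime (N : ℕ) (Δt : ℕ → ℝ) (n : ℕ) : ℝ :=
  ∑ m ∈ Icc (n + 1) (N + 1), Δt m

def uniformAlloc (N : ℕ) (F Δt : ℕ → ℝ) (n _ : ℕ) : ℝ :=
  F n / availableTime N Δt n

end

section

variable {N : ℕ} {κ Fmax : ℝ} {F Δt : ℕ → ℝ}

theorem availableTime_pos (hΔt : ∀ m ∈ Icc 2 (N + 1), 0 < Δt m) {n : ℕ} (hn : n ∈ Icc 1 N) :
    0 < availableTime N Δt n := by
  rw [mem_Icc] at hn
  refine sum_pos (fun m hm => hΔt m ?_) (nonempty_Icc.2 (by omega))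
  rw [mem_Icc] at hm ⊢
  omega

theorem uniformAlloc_nonneg (hF : ∀ n ∈ Icc 1 N, 0 < F n)
    (hΔt : ∀ m ∈ Icc 2 (N + 1), 0 < Δt m) {n : ℕ} (hn : n ∈ Icc 1 N) (m : ℕ) :
    0 ≤ uniformAlloc N F Δt n m :=
  div_nonneg (hF n hn).le (availableTime_pos hΔt hn).le

theorem uniformAlloc_feasible (hF : ∀ n ∈ Icc 1 N, 0 < F n)
    (hΔt : ∀ m ∈ Icc 2 (N + 1), 0 < Δt m)
    (habund : ∑ n ∈ Icc 1 N, F n / availableTime N Δt n ≤ Fmax) :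
    FeasibleAlloc N Fmax F Δt (uniformAlloc N F Δt) := by
  refine ⟨fun n hn m _ => uniformAlloc_nonneg hF hΔt hn m, fun m hm => ?_, fun n hn => ?_⟩
  · rw [mem_Icc] at hm
    calc ∑ n ∈ Icc 1 (m - 1), uniformAlloc N F Δt n m
        ≤ ∑ n ∈ Icc 1 N, F n / availableTime N Δt n :=
          sum_le_sum_of_subset_of_nonneg (Icc_subset_Icc_right (by omega))
            fun n hn _ => uniformAlloc_nonneg hF hΔt hn m
      _ ≤ Fmax := habund
  · simp only [uniformAlloc]
    rw [← mul_sum, ← availableTime, div_mul_cancel₀ _ (availableTime_pos hΔt hn).ne']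

theorem allocEnergy_uniformAlloc (hΔt : ∀ m ∈ Icc 2 (N + 1), 0 < Δt m) :
    allocEnergy N κ Δt (uniformAlloc N F Δt) =
      ∑ n ∈ Icc 1 N, κ * F n ^ 3 / availableTime N Δt n ^ 2 := by
  refine sum_congr rfl fun n hn => ?_
  have hS := (availableTime_pos hΔt hn).ne'
  simp only [uniformAlloc]
  rw [← mul_sum, ← availableTime]
  field_simp

theorem allocEnergy_uniformAlloc_le (hκ : 0 ≤ κ) (hF : ∀ n ∈ Icc 1 N, 0 < F n)
    (hΔt : ∀ m ∈ Icc 2 (N + 1), 0 < Δt m) {f : ℕ → ℕ → ℝ} (hf : FeasibleAlloc N Fmax F Δt f) :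
    allocEnergy N κ Δt (uniformAlloc N F Δt) ≤ allocEnergy N κ Δt f := by
  obtain ⟨hf_nonneg, -, hf_complete⟩ := hf
  rw [allocEnergy_uniformAlloc hΔt]
  refine sum_le_sum fun n hn => ?_
  have hΔt_nonneg : ∀ m ∈ Icc (n + 1) (N + 1), 0 ≤ Δt m := fun m hm => by
    rw [mem_Icc] at hn hm
    exact (hΔt m (mem_Icc.2 ⟨by omega, hm.2⟩)).le
  have hcost := pow_succ_div_pow_le_sum_mul_pow hΔt_nonneg (hf_nonneg n hn) (hF n hn).le
    (by simpa only [mul_comm] using hf_complete n hn) 2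
  calc κ * F n ^ 3 / availableTime N Δt n ^ 2
      = κ * (F n ^ 3 / availableTime N Δt n ^ 2) := mul_div_assoc _ _ _
    _ ≤ κ * ∑ m ∈ Icc (n + 1) (N + 1), Δt m * f n m ^ 3 := mul_le_mul_of_nonneg_left hcost hκ
    _ = ∑ m ∈ Icc (n + 1) (N + 1), κ * f n m ^ 3 * Δt m := by
      rw [mul_sum]
      exact sum_congr rfl fun m _ => by ring

end

theorem stmt_12_general (N : ℕ) (κ Fmax : ℝ) (hκ : 0 < κ) (F Δt : ℕ → ℝ)
    (hF : ∀ n ∈ Finset.Icc 1 N, 0 < F n)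
    (hΔt : ∀ m ∈ Finset.Icc 2 (N + 1), 0 < Δt m)
    (habund : ∑ n ∈ Finset.Icc 1 N,
        F n / (∑ m ∈ Finset.Icc (n + 1) (N + 1), Δt m) ≤ Fmax) :
    FeasibleAlloc N Fmax F Δt
      (fun n _ => F n / (∑ m ∈ Finset.Icc (n + 1) (N + 1), Δt m)) ∧
    allocEnergy N κ Δt
        (fun n _ => F n / (∑ m ∈ Finset.Icc (n + 1) (N + 1), Δt m)) =
      ∑ n ∈ Finset.Icc 1 N,
        κ * F n ^ 3 / (∑ m ∈ Finset.Icc (n + 1) (N + 1), Δt m) ^ 2 ∧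
    ∀ f : ℕ → ℕ → ℝ, FeasibleAlloc N Fmax F Δt f →
      allocEnergy N κ Δt
          (fun n _ => F n / (∑ m ∈ Finset.Icc (n + 1) (N + 1), Δt m)) ≤
        allocEnergy N κ Δt f :=
  ⟨uniformAlloc_feasible hF hΔt habund, allocEnergy_uniformAlloc hΔt,
    fun _ hf => allocEnergy_uniformAlloc_le hκ.le hF hΔt hf⟩

/-- Abundant-resource case: if F_max ≥ ∑_n F_n/(∑_{m>n} Δt_m), the constant
allocation f_{n,m} = F_n/(∑_{m'=n+1}^{N+1} Δt_{m'}) is feasible, its energy is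
∑_n κ·F_n³/(∑ Δt)², and it is globally optimal. -/
theorem stmt_12 (N : ℕ) (hN : 1 ≤ N) (κ Fmax : ℝ) (hκ : 0 < κ) (F Δt : ℕ → ℝ)
    (hF : ∀ n ∈ Finset.Icc 1 N, 0 < F n)
    (hΔt : ∀ m ∈ Finset.Icc 2 (N + 1), 0 < Δt m)
    (habund : ∑ n ∈ Finset.Icc 1 N,
        F n / (∑ m ∈ Finset.Icc (n + 1) (N + 1), Δt m) ≤ Fmax) :
    FeasibleAlloc N Fmax F Δt
      (fun n _ => F n / (∑ m ∈ Finset.Icc (n + 1) (N + 1), Δt m)) ∧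
    allocEnergy N κ Δt
        (fun n _ => F n / (∑ m ∈ Finset.Icc (n + 1) (N + 1), Δt m)) =
      ∑ n ∈ Finset.Icc 1 N,
        κ * F n ^ 3 / (∑ m ∈ Finset.Icc (n + 1) (N + 1), Δt m) ^ 2 ∧
    ∀ f : ℕ → ℕ → ℝ, FeasibleAlloc N Fmax F Δt f →
      allocEnergy N κ Δt
          (fun n _ => F n / (∑ m ∈ Finset.Icc (n + 1) (N + 1), Δt m)) ≤
        allocEnergy N κ Δt f :=
  stmt_12_general N κ Fmax hκ F Δt hF hΔt habund
end

section
/- Column positivity (coincident sign property): in the setting of the previous statement, for any Υ < 0 the minimizer δ*_n of J_n(δ) = E_n(F_n, δ) + Υ·δ over [0, F_n/t_m] is strictly positive for every n with F_n > 0. Hence when the optimal multiplier Υ* < 0 is chosen so that ∑_{n=1}^{m−1} δ*_n = Ω > 0, all optimal frequency shifts δ*_n = f*_{n,m} − f*_{n,m+1} are simultaneously strictly positive. -/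
set_option maxHeartbeats 1000000


/-- Column positivity: for Υ < 0, the minimizer over [0, F_n/t_m] of
J_n(δ) = E_n(F_n,δ) + Υ·δ is strictly positive for every task n with F_n > 0,
so all optimal frequency shifts δ*_n are simultaneously strictly positive. -/
theorem stmt_19 (m : ℕ) (tm tm1 κ Υ : ℝ) (F δ : ℕ → ℝ)
    (htm : 0 < tm) (htm1 : 0 < tm1) (hκ : 0 < κ) (hΥ : Υ < 0)
    (hF : ∀ n ∈ Finset.Icc 1 (m - 1), 0 < F n)
    (hmin : ∀ n ∈ Finset.Icc 1 (m - 1),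
      δ n ∈ Set.Icc 0 (F n / tm) ∧
      ∀ d ∈ Set.Icc 0 (F n / tm),
        κ * (F n + δ n * tm1) ^ 3 * tm / (tm + tm1) ^ 3 +
            κ * (F n - δ n * tm) ^ 3 * tm1 / (tm + tm1) ^ 3 + Υ * δ n ≤
          κ * (F n + d * tm1) ^ 3 * tm / (tm + tm1) ^ 3 +
            κ * (F n - d * tm) ^ 3 * tm1 / (tm + tm1) ^ 3 + Υ * d) :
    ∀ n ∈ Finset.Icc 1 (m - 1), 0 < δ n := by
  intro n hn
  obtain ⟨⟨hδ0, hδub⟩, hopt⟩ := hmin n hn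
  have hFn : 0 < F n := hF n hn
  rcases lt_or_eq_of_le hδ0 with h | h
  · exact h
  exfalso
  have hs : (0:ℝ) < tm + tm1 := by linarith
  set c : ℝ := κ / (tm + tm1) ^ 3 with hc
  have hcpos : 0 < c := by positivity
  set K : ℝ := c * tm * tm1 * (3 * F n + F n / tm * tm1) * (tm + tm1) with hK
  have hKpos : 0 < K := by positivity
  set d : ℝ := min (F n / tm) (-Υ / (K + 1)) with hd
  have hKpos1 : (0:ℝ) < K + 1 := by linarith
  have hdpos : 0 < d := lt_min (by positivity) (div_pos (by linarith) hKpos1)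
  have hd1 : d ≤ F n / tm := min_le_left _ _
  have hd2 : d ≤ -Υ / (K + 1) := min_le_right _ _
  have hdtm : d * tm ≤ F n := by
    rw [le_div_iff₀ htm] at hd1; linarith
  have H := hopt d ⟨le_of_lt hdpos, hd1⟩
  rw [← h] at H
  have hid : κ * (F n + d * tm1) ^ 3 * tm / (tm + tm1) ^ 3 +
      κ * (F n - d * tm) ^ 3 * tm1 / (tm + tm1) ^ 3 -
      (κ * (F n + 0 * tm1) ^ 3 * tm / (tm + tm1) ^ 3 +
        κ * (F n - 0 * tm) ^ 3 * tm1 / (tm + tm1) ^ 3) =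
      c * tm * tm1 * d ^ 2 * (3 * F n * (tm + tm1) + d * (tm1 ^ 2 - tm ^ 2)) := by
    rw [hc]; field_simp; ring
  have H2 : -Υ * d ≤ c * tm * tm1 * d ^ 2 *
      (3 * F n * (tm + tm1) + d * (tm1 ^ 2 - tm ^ 2)) := by
    nlinarith [H, hid]
  have H3 : -Υ ≤ c * tm * tm1 * d *
      (3 * F n * (tm + tm1) + d * (tm1 ^ 2 - tm ^ 2)) := by
    have hre : c * tm * tm1 * d ^ 2 * (3 * F n * (tm + tm1) + d * (tm1 ^ 2 - tm ^ 2)) =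
        c * tm * tm1 * d * (3 * F n * (tm + tm1) + d * (tm1 ^ 2 - tm ^ 2)) * d := by ring
    rw [hre] at H2
    exact le_of_mul_le_mul_right H2 hdpos
  have hbd : d * (tm1 ^ 2 - tm ^ 2) ≤ F n / tm * tm1 * (tm + tm1) := by
    have h1 : d * tm1 ≤ F n / tm * tm1 := by nlinarith
    nlinarith [mul_le_mul_of_nonneg_right h1 htm1.le,
      mul_nonneg (mul_nonneg hdpos.le htm.le) htm.le,
      mul_nonneg (mul_nonneg (div_nonneg hFn.le htm.le) htm1.le) htm.le]
  have H4 : -Υ ≤ K * d := by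
    rw [hK]
    have hcd : 0 < c * tm * tm1 * d := by positivity
    nlinarith [mul_le_mul_of_nonneg_left hbd (le_of_lt hcd)]
  have H5 : K * d < -Υ := by
    have h6 : d * (K + 1) ≤ -Υ := (le_div_iff₀ hKpos1).mp hd2
    nlinarith
  linarith
end
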